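/- (Suboptimality of pessimistic value iteration under pointwise uncertainty quantification.) In a finite-horizon tabular MDP with rewards in [0,1], let Γ_h : S×A → [0,∞) and f̂_h : S×A → ℝ for h = 1,…,H, and define Q̂_{H+1} ≡ 0 and, backward for h = H,…,1: Q̂_h(s,a) = f̂_h(s,a) − Γ_h(s,a), V̂_h(s) = max_a Q̂_h(s,a), and let π̂_h(s) ∈ argmax_a Q̂_h(s,a) be the greedy policy. Suppose the pointwise pessimism condition holds: |f̂_h(s,a) − (r_h(s,a) + Σ_{s'} P_h(s'|s,a) V̂_{h+1}(s'))| ≤ Γ_h(s,a) for all h, s, a. Then for any optimal policy π*, v^{π*} − v^{π̂} ≤ 2 Σ_{h=1}^H Σ_{(s,a)} d^{π*}_h(s,a) Γ_h(s,a). -/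

import Mathlib

/-!
Both values are compared with the pessimistic estimate `V̂` through the extended
value-difference identity `v^π - E_{d₁} V̂_1 = Σ_h E_{d^π_h} [r_h + P_h V̂_{h+1} - V̂_h]`,
valid for every policy `π` and every `V̂` vanishing at the horizon. Along the greedy policy
the Bellman residual of `V̂` is nonnegative, because `V̂_h(s) = Q̂_h(s, π̂ s) ≤ r_h + P_h V̂_{h+1}`
by pessimism; along `π*` it is at most `2 Γ_h`, because
`V̂_h(s) ≥ Q̂_h(s, a) ≥ r_h + P_h V̂_{h+1} - 2 Γ_h`.
-/

open Finset MeasureTheory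

section MDPDefs

variable {S A : Type} [Fintype S] [Fintype A]

/-- `π` is a (time-inhomogeneous, Markov) policy: `π t s a = π_t(a|s)`. -/
def IsPolicy (π : ℕ → S → A → ℝ) : Prop :=
  (∀ t s a, 0 ≤ π t s a) ∧ ∀ t s, ∑ a : A, π t s a = 1

/-- `P` is a transition kernel: `P t s a s' = P_t(s'|s,a)`. -/
def IsKernel (P : ℕ → S → A → S → ℝ) : Prop :=
  (∀ t s a s', 0 ≤ P t s a s') ∧ ∀ t s a, ∑ s' : S, P t s a s' = 1

/-- `d` is a probability distribution on states. -/
def IsDist (d : S → ℝ) : Prop := (∀ s, 0 ≤ d s) ∧ ∑ s : S, d s = 1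

/-- Value function `V^π_t` (time `t` is 0-indexed, horizon `H`, `V^π_t = 0` for `t ≥ H`):
`V^π_t(s) = Σ_a π_t(a|s) (r_t(s,a) + Σ_{s'} P_t(s'|s,a) V^π_{t+1}(s'))`. -/
noncomputable def valueV (H : ℕ) (P : ℕ → S → A → S → ℝ) (r : ℕ → S → A → ℝ)
    (π : ℕ → S → A → ℝ) (t : ℕ) : S → ℝ :=
  if _h : t < H then
    fun s => ∑ a : A, π t s a * (r t s a + ∑ s' : S, P t s a s' * valueV H P r π (t + 1) s')
  else fun _ => 0
termination_by H - t
decreasing_by omega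

/-- Q function `Q^π_t(s,a) = r_t(s,a) + Σ_{s'} P_t(s'|s,a) V^π_{t+1}(s')`. -/
noncomputable def qval (H : ℕ) (P : ℕ → S → A → S → ℝ) (r : ℕ → S → A → ℝ)
    (π : ℕ → S → A → ℝ) (t : ℕ) (s : S) (a : A) : ℝ :=
  r t s a + ∑ s' : S, P t s a s' * valueV H P r π (t + 1) s'

/-- The value of a policy: `v^π = Σ_s d₁(s) V^π_1(s)`. -/
noncomputable def vval (H : ℕ) (P : ℕ → S → A → S → ℝ) (r : ℕ → S → A → ℝ)
    (π : ℕ → S → A → ℝ) (d1 : S → ℝ) : ℝ :=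
  ∑ s : S, d1 s * valueV H P r π 0 s

/-- Marginal state occupancy `d^π_t(s)` (time 0-indexed). -/
noncomputable def occS (P : ℕ → S → A → S → ℝ) (π : ℕ → S → A → ℝ) (d1 : S → ℝ) :
    ℕ → S → ℝ
  | 0 => d1
  | t + 1 => fun s' => ∑ s : S, ∑ a : A, occS P π d1 t s * π t s a * P t s a s'

/-- Marginal state-action occupancy `d^π_t(s,a) = d^π_t(s) π_t(a|s)`. -/
noncomputable def occSA (P : ℕ → S → A → S → ℝ) (π : ℕ → S → A → ℝ) (d1 : S → ℝ)
    (t : ℕ) (s : S) (a : A) : ℝ :=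
  occS P π d1 t s * π t s a

end MDPDefs
section PVI

variable {S A : Type} [Fintype S] [Fintype A]

/-- The pessimistic Q estimate `Q̂_t = f̂_t − Γ_t`. -/
noncomputable def qhat (fhat Γ : ℕ → S → A → ℝ) (t : ℕ) (s : S) (a : A) : ℝ :=
  fhat t s a - Γ t s a

/-- The pessimistic value estimate `V̂_t(s) = max_a Q̂_t(s,a)` for `t < H`, and
`V̂_t = 0` past the horizon. -/
noncomputable def vhat [Nonempty A] (H : ℕ) (fhat Γ : ℕ → S → A → ℝ) (t : ℕ) (s : S) : ℝ :=
  if t < H then Finset.univ.sup' Finset.univ_nonempty (fun a : A => qhat fhat Γ t s a)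
  else 0

end PVI

variable {S A : Type}

lemma isPolicy_indicator [Fintype A] [DecidableEq A] (pi : ℕ → S → A) :
    IsPolicy (fun t s a => if a = pi t s then (1 : ℝ) else 0) :=
  ⟨fun _ _ _ => by dsimp only; split_ifs <;> norm_num, fun t s => by simp⟩

section ValueDifference

variable [Fintype S] [Fintype A] {H : ℕ} {P : ℕ → S → A → S → ℝ} {r : ℕ → S → A → ℝ}
  {π : ℕ → S → A → ℝ} {d1 : S → ℝ}

lemma valueV_of_lt {t : ℕ} (ht : t < H) (s : S) :
    valueV H P r π t s = ∑ a : A, π t s a * qval H P r π t s a := by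
  rw [valueV]; simp [ht, qval]

lemma valueV_of_le {t : ℕ} (ht : H ≤ t) (s : S) : valueV H P r π t s = 0 := by
  rw [valueV]; simp [Nat.not_lt.2 ht]

lemma occS_nonneg (hP : ∀ t s a s', 0 ≤ P t s a s') (hπ : ∀ t s a, 0 ≤ π t s a)
    (hd1 : ∀ s, 0 ≤ d1 s) (t : ℕ) (s : S) : 0 ≤ occS P π d1 t s := by
  induction t generalizing s with
  | zero => exact hd1 s
  | succ t ih =>
    exact sum_nonneg fun s₀ _ => sum_nonneg fun a _ =>
      mul_nonneg (mul_nonneg (ih s₀) (hπ t s₀ a)) (hP t s₀ a s)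

lemma occSA_nonneg (hP : ∀ t s a s', 0 ≤ P t s a s') (hπ : ∀ t s a, 0 ≤ π t s a)
    (hd1 : ∀ s, 0 ≤ d1 s) (t : ℕ) (s : S) (a : A) : 0 ≤ occSA P π d1 t s a :=
  mul_nonneg (occS_nonneg hP hπ hd1 t s) (hπ t s a)

lemma sum_occS_succ_mul (t : ℕ) (f : S → ℝ) :
    ∑ s' : S, occS P π d1 (t + 1) s' * f s'
      = ∑ s : S, ∑ a : A, occSA P π d1 t s a * ∑ s' : S, P t s a s' * f s' := by
  simp only [occS, occSA, sum_mul, mul_sum]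
  rw [sum_comm]
  refine sum_congr rfl fun s _ => ?_
  rw [sum_comm]
  exact sum_congr rfl fun a _ => sum_congr rfl fun s' _ => by ring

noncomputable def bellmanResidual (P : ℕ → S → A → S → ℝ) (r : ℕ → S → A → ℝ)
    (V : ℕ → S → ℝ) (t : ℕ) (s : S) (a : A) : ℝ :=
  r t s a + ∑ s' : S, P t s a s' * V (t + 1) s' - V t s

lemma sum_occS_mul_valueV_sub_eq (hπ : ∀ t s, ∑ a : A, π t s a = 1) (V : ℕ → S → ℝ)
    {t : ℕ} (ht : t < H) :
    ∑ s : S, occS P π d1 t s * (valueV H P r π t s - V t s)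
      = ∑ s : S, ∑ a : A, occSA P π d1 t s a * bellmanResidual P r V t s a
        + ∑ s : S, occS P π d1 (t + 1) s * (valueV H P r π (t + 1) s - V (t + 1) s) := by
  rw [sum_occS_succ_mul, ← sum_add_distrib]
  refine sum_congr rfl fun s _ => ?_
  have hdiff : valueV H P r π t s - V t s = ∑ a : A, π t s a * (bellmanResidual P r V t s a
      + ∑ s' : S, P t s a s' * (valueV H P r π (t + 1) s' - V (t + 1) s')) := by
    conv_lhs => rw [valueV_of_lt ht, ← one_mul (V t s), ← hπ t s, sum_mul, ← sum_sub_distrib]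
    refine sum_congr rfl fun a _ => ?_
    simp only [qval, bellmanResidual, mul_sub, sum_sub_distrib]
    ring
  rw [hdiff, mul_sum, ← sum_add_distrib]
  refine sum_congr rfl fun a _ => ?_
  simp only [occSA]
  ring

theorem vval_sub_eq_sum_occSA_mul_bellmanResidual (hπ : ∀ t s, ∑ a : A, π t s a = 1)
    (V : ℕ → S → ℝ) (hV : ∀ s, V H s = 0) :
    vval H P r π d1 - ∑ s : S, d1 s * V 0 s
      = ∑ t ∈ range H, ∑ s : S, ∑ a : A, occSA P π d1 t s a * bellmanResidual P r V t s a := by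
  set D : ℕ → ℝ := fun t => ∑ s : S, occS P π d1 t s * (valueV H P r π t s - V t s)
  have hD0 : vval H P r π d1 - ∑ s : S, d1 s * V 0 s = D 0 := by
    simp only [D, vval, occS, mul_sub, sum_sub_distrib]
  have hDH : D H = 0 := by simp [D, valueV_of_le le_rfl, hV]
  rw [hD0, ← sub_zero (D 0), ← hDH, ← sum_range_sub']
  refine sum_congr rfl fun t ht => ?_
  simp only [D]
  rw [sum_occS_mul_valueV_sub_eq hπ V (mem_range.1 ht)]
  ring

end ValueDifference

section Pessimism

variable [Fintype A] [Nonempty A] {H : ℕ} {fhat Γ : ℕ → S → A → ℝ}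

lemma vhat_of_le {t : ℕ} (ht : H ≤ t) (s : S) : vhat H fhat Γ t s = 0 := by
  simp [vhat, Nat.not_lt.2 ht]

lemma qhat_le_vhat {t : ℕ} (ht : t < H) (s : S) (a : A) :
    qhat fhat Γ t s a ≤ vhat H fhat Γ t s := by
  rw [vhat, if_pos ht]
  exact le_sup' (fun a => qhat fhat Γ t s a) (mem_univ a)

variable [Fintype S] {P : ℕ → S → A → S → ℝ} {r : ℕ → S → A → ℝ}

lemma bellmanResidual_vhat_le_two_mul {t : ℕ} (ht : t < H) {s : S} {a : A}
    (hpess : |fhat t s a - (r t s a + ∑ s' : S, P t s a s' * vhat H fhat Γ (t + 1) s')|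
      ≤ Γ t s a) :
    bellmanResidual P r (vhat H fhat Γ) t s a ≤ 2 * Γ t s a := by
  have hq := qhat_le_vhat (fhat := fhat) (Γ := Γ) ht s a
  unfold bellmanResidual
  unfold qhat at hq
  linarith [(abs_le.1 hpess).1]

lemma bellmanResidual_vhat_nonneg_of_greedy {t : ℕ} {s : S} {a : A}
    (hgreedy : qhat fhat Γ t s a = vhat H fhat Γ t s)
    (hpess : |fhat t s a - (r t s a + ∑ s' : S, P t s a s' * vhat H fhat Γ (t + 1) s')|
      ≤ Γ t s a) :
    0 ≤ bellmanResidual P r (vhat H fhat Γ) t s a := by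
  unfold bellmanResidual
  rw [← hgreedy, qhat]
  linarith [(abs_le.1 hpess).2]

variable {d1 : S → ℝ}

lemma sum_occSA_mul_bellmanResidual_vhat_le {π : ℕ → S → A → ℝ}
    (hpess : ∀ t < H, ∀ (s : S) (a : A),
      |fhat t s a - (r t s a + ∑ s' : S, P t s a s' * vhat H fhat Γ (t + 1) s')| ≤ Γ t s a)
    (hP : ∀ t s a s', 0 ≤ P t s a s') (hπ : ∀ t s a, 0 ≤ π t s a) (hd1 : ∀ s, 0 ≤ d1 s) :
    ∑ t ∈ range H, ∑ s : S, ∑ a : A,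
        occSA P π d1 t s a * bellmanResidual P r (vhat H fhat Γ) t s a
      ≤ 2 * ∑ t ∈ range H, ∑ s : S, ∑ a : A, occSA P π d1 t s a * Γ t s a := by
  simp only [mul_sum]
  refine sum_le_sum fun t ht => sum_le_sum fun s _ => sum_le_sum fun a _ => ?_
  rw [mul_left_comm]
  exact mul_le_mul_of_nonneg_left
    (bellmanResidual_vhat_le_two_mul (mem_range.1 ht) (hpess t (mem_range.1 ht) s a))
    (occSA_nonneg hP hπ hd1 t s a)

lemma sum_occSA_greedy_mul_bellmanResidual_vhat_nonneg [DecidableEq A] {pihat : ℕ → S → A}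
    (hpess : ∀ t < H, ∀ (s : S) (a : A),
      |fhat t s a - (r t s a + ∑ s' : S, P t s a s' * vhat H fhat Γ (t + 1) s')| ≤ Γ t s a)
    (hP : ∀ t s a s', 0 ≤ P t s a s') (hd1 : ∀ s, 0 ≤ d1 s)
    (hgreedy : ∀ t < H, ∀ s : S, qhat fhat Γ t s (pihat t s) = vhat H fhat Γ t s) :
    0 ≤ ∑ t ∈ range H, ∑ s : S, ∑ a : A,
      occSA P (fun t s a => if a = pihat t s then (1 : ℝ) else 0) d1 t s a
        * bellmanResidual P r (vhat H fhat Γ) t s a := by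
  refine sum_nonneg fun t ht => sum_nonneg fun s _ => sum_nonneg fun a _ => ?_
  by_cases ha : a = pihat t s
  · subst ha
    exact mul_nonneg (occSA_nonneg hP (isPolicy_indicator pihat).1 hd1 t s _)
      (bellmanResidual_vhat_nonneg_of_greedy (hgreedy t (mem_range.1 ht) s)
        (hpess t (mem_range.1 ht) s _))
  · simp [occSA, ha]

end Pessimism

variable [Fintype S] [Fintype A]

theorem pessimistic_value_iteration_suboptimality_general [Nonempty A] [DecidableEq A]
    (H : ℕ)
    (P : ℕ → S → A → S → ℝ) (r : ℕ → S → A → ℝ) (d1 : S → ℝ)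
    (hP : IsKernel P) (hd1 : IsDist d1)
    (Γ fhat : ℕ → S → A → ℝ)
    (pihat : ℕ → S → A)
    (hgreedy : ∀ t < H, ∀ s : S, qhat fhat Γ t s (pihat t s) = vhat H fhat Γ t s)
    (hpess : ∀ t < H, ∀ (s : S) (a : A),
      |fhat t s a - (r t s a + ∑ s' : S, P t s a s' * vhat H fhat Γ (t + 1) s')|
        ≤ Γ t s a)
    (pistar : ℕ → S → A → ℝ) (hpistar : IsPolicy pistar) :
    vval H P r pistar d1
        - vval H P r (fun t s a => if a = pihat t s then (1 : ℝ) else 0) d1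
      ≤ 2 * ∑ t ∈ Finset.range H, ∑ s : S, ∑ a : A, occSA P pistar d1 t s a * Γ t s a := by
  have hVH : ∀ s, vhat H fhat Γ H s = 0 := vhat_of_le le_rfl
  have hstar := vval_sub_eq_sum_occSA_mul_bellmanResidual (P := P) (r := r) (d1 := d1)
    hpistar.2 _ hVH
  have hhat := vval_sub_eq_sum_occSA_mul_bellmanResidual (P := P) (r := r) (d1 := d1)
    (isPolicy_indicator pihat).2 _ hVH
  linarith [sum_occSA_mul_bellmanResidual_vhat_le hpess hP.1 hpistar.1 hd1.1,
    sum_occSA_greedy_mul_bellmanResidual_vhat_nonneg hpess hP.1 hd1.1 hgreedy]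

/-- Suboptimality of pessimistic value iteration under pointwise
uncertainty quantification.  In a finite-horizon tabular MDP with rewards in
`[0,1]`, let `Γ_h ≥ 0` and `f̂_h` be given, define `Q̂_h = f̂_h − Γ_h`,
`V̂_h(s) = max_a Q̂_h(s,a)`, and let `π̂` be greedy w.r.t. `Q̂`.  If the pointwise
pessimism condition `|f̂_h(s,a) − (r_h(s,a) + Σ_{s'} P_h(s'|s,a) V̂_{h+1}(s'))| ≤ Γ_h(s,a)`
holds for all `h, s, a`, then for any optimal policy `π*`,
`v^{π*} − v^{π̂} ≤ 2 Σ_h Σ_{s,a} d^{π*}_h(s,a) Γ_h(s,a)`. -/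
theorem pessimistic_value_iteration_suboptimality [Nonempty S] [Nonempty A] [DecidableEq A]
    (H : ℕ) (hH : 1 ≤ H)
    (P : ℕ → S → A → S → ℝ) (r : ℕ → S → A → ℝ) (d1 : S → ℝ)
    (hP : IsKernel P) (hr : ∀ t s a, r t s a ∈ Set.Icc (0 : ℝ) 1) (hd1 : IsDist d1)
    (Γ fhat : ℕ → S → A → ℝ) (hΓ : ∀ t s a, 0 ≤ Γ t s a)
    (pihat : ℕ → S → A)
    (hgreedy : ∀ t < H, ∀ s : S, qhat fhat Γ t s (pihat t s) = vhat H fhat Γ t s)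
    (hpess : ∀ t < H, ∀ (s : S) (a : A),
      |fhat t s a - (r t s a + ∑ s' : S, P t s a s' * vhat H fhat Γ (t + 1) s')|
        ≤ Γ t s a)
    (pistar : ℕ → S → A → ℝ) (hpistar : IsPolicy pistar)
    (hopt : ∀ π' : ℕ → S → A → ℝ, IsPolicy π' → vval H P r π' d1 ≤ vval H P r pistar d1) :
    vval H P r pistar d1
        - vval H P r (fun t s a => if a = pihat t s then (1 : ℝ) else 0) d1
      ≤ 2 * ∑ t ∈ Finset.range H, ∑ s : S, ∑ a : A, occSA P pistar d1 t s a * Γ t s a :=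
  pessimistic_value_iteration_suboptimality_general H P r d1 hP hd1 Γ fhat pihat hgreedy hpess
    pistar hpistar
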